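/- arXiv:1602.01049 — 2 statements merged into one kernel-verified Lean document; each statement's English description precedes it below -/
import Mathlib

section
/- Let x : ℝ → ℝ² be a twice differentiable solution of the planar Kepler problem (so x(t) ≠ 0 and ẍ(t) = −x(t)/|x(t)|³ for all t), and define ξ : ℝ → ℝ² along the solution by ξ₁ = −½x₂ẋ₂ and ξ₂ = x₁ẋ₂ − ½ẋ₁x₂. Then for all t: ⟨−x/|x|³, ξ⟩ + ⟨ẋ, ξ'⟩ = ẋ₁/|x| − ⟨x, ẋ⟩·x₁/|x|³, and this quantity equals d/dt(x₁/|x|). (Here −x/|x|³ = ∇ₓ𝓛(x, ẋ) and ẋ = ∇ᵥ𝓛(x, ẋ) for the Kepler Lagrangian 𝓛(x, v) = ½|v|² + 1/|x|.) -/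
/-!
The field is `ξ = B(x, ẋ)` for a bilinear map `B`, so `ξ' = B(ẋ, ẋ) + B(x, ẍ)`. Substituting
`ẍ = −x/|x|³`, the left-hand side collapses to `(ẋ₁x₂² − x₁x₂ẋ₂)/|x|³`, which is the quotient-rule
derivative of `x₁/|x|` once `|x|² = x₁² + x₂²` is used.
-/

open scoped RealInnerProductSpace

theorem hasDerivAt_piLp {𝕜 ι : Type*} [NontriviallyNormedField 𝕜] [Fintype ι]
    {E : ι → Type*} [∀ i, NormedAddCommGroup (E i)] [∀ i, NormedSpace 𝕜 (E i)]
    {p : ENNReal} [Fact (1 ≤ p)] {f : 𝕜 → PiLp p E} {f' : PiLp p E} {t : 𝕜} :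
    HasDerivAt f f' t ↔ ∀ i, HasDerivAt (fun s => f s i) (f' i) t := by
  simp only [hasDerivAt_iff_hasFDerivAt, ← hasFDerivWithinAt_univ, hasFDerivWithinAt_piLp]
  rfl

theorem HasDerivAt.norm {F : Type*} [NormedAddCommGroup F] [InnerProductSpace ℝ F]
    {f : ℝ → F} {f' : F} {t : ℝ} (hf : HasDerivAt f f' t) (h0 : f t ≠ 0) :
    HasDerivAt (fun s => ‖f s‖) (⟪f t, f'⟫ / ‖f t‖) t := by
  have h := hf.norm_sq.sqrt (by positivity)
  simp only [Real.sqrt_sq (norm_nonneg _)] at h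
  convert h using 1
  ring

theorem HasDerivAt.apply_div_norm {ι : Type*} [Fintype ι] {f : ℝ → EuclideanSpace ℝ ι}
    {f' : EuclideanSpace ℝ ι} {t : ℝ} (hf : HasDerivAt f f' t) (h0 : f t ≠ 0) (i : ι) :
    HasDerivAt (fun s => f s i / ‖f s‖) (f' i / ‖f t‖ - ⟪f t, f'⟫ * f t i / ‖f t‖ ^ 3) t := by
  have hf0 : ‖f t‖ ≠ 0 := norm_ne_zero_iff.mpr h0
  refine ((hasDerivAt_piLp.mp hf i).fun_div (hf.norm h0) hf0).congr_deriv ?_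
  field_simp

noncomputable def lrlNoetherField (q v : EuclideanSpace ℝ (Fin 2)) : EuclideanSpace ℝ (Fin 2) :=
  !₂[-(1 / 2) * q 1 * v 1, q 0 * v 1 - (1 / 2) * v 0 * q 1]

theorem HasDerivAt.lrlNoetherField {q v : ℝ → EuclideanSpace ℝ (Fin 2)}
    {q' v' : EuclideanSpace ℝ (Fin 2)} {t : ℝ} (hq : HasDerivAt q q' t) (hv : HasDerivAt v v' t) :
    HasDerivAt (fun s => lrlNoetherField (q s) (v s))
      (lrlNoetherField q' (v t) + lrlNoetherField (q t) v') t := by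
  have hq := hasDerivAt_piLp.mp hq
  have hv := hasDerivAt_piLp.mp hv
  rw [hasDerivAt_piLp]
  intro i
  fin_cases i <;>
    simp only [_root_.lrlNoetherField, PiLp.add_apply, Fin.zero_eta, Fin.mk_one,
      Matrix.cons_val_zero, Matrix.cons_val_one, Matrix.cons_val_fin_one]
  · exact (((hq 1).const_mul _).fun_mul (hv 1)).congr_deriv (by ring)
  · exact (((hq 0).fun_mul (hv 1)).fun_sub (((hv 0).const_mul _).fun_mul (hq 1))).congr_deriv
      (by ring)

theorem inner_kepler_lrlNoetherField {q : EuclideanSpace ℝ (Fin 2)} (hq : q ≠ 0)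
    (v : EuclideanSpace ℝ (Fin 2)) :
    ⟪-((‖q‖ ^ 3)⁻¹ • q), lrlNoetherField q v⟫
        + ⟪v, lrlNoetherField v v + lrlNoetherField q (-((‖q‖ ^ 3)⁻¹ • q))⟫
      = v 0 / ‖q‖ - ⟪q, v⟫ * q 0 / ‖q‖ ^ 3 := by
  have hnorm : ‖q‖ ^ 2 = q 0 ^ 2 + q 1 ^ 2 := by
    simp [EuclideanSpace.norm_sq_eq, Fin.sum_univ_two]
  have hq0 : ‖q‖ ≠ 0 := norm_ne_zero_iff.mpr hq
  simp only [lrlNoetherField, inner_neg_left, PiLp.inner_apply, PiLp.smul_apply, smul_eq_mul,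
    RCLike.inner_apply, Real.ringHom_apply, Fin.sum_univ_two, Matrix.cons_val_zero,
    Matrix.cons_val_one, Matrix.cons_val_fin_one, PiLp.neg_apply, PiLp.add_apply]
  field_simp
  linear_combination (-2 * v 0) * hnorm

/-- For a solution of the planar Kepler problem and the Noether vector field
`ξ₁ = −½x₂ẋ₂`, `ξ₂ = x₁ẋ₂ − ½ẋ₁x₂`, we have
`⟨−x/|x|³, ξ⟩ + ⟨ẋ, ξ'⟩ = ẋ₁/|x| − ⟨x, ẋ⟩x₁/|x|³`, and this quantity equals
`d/dt (x₁/|x|)`.  (Here `−x/|x|³ = ∇ₓ𝓛(x, ẋ)` and `ẋ = ∇ᵥ𝓛(x, ẋ)` for the Kepler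
Lagrangian `𝓛(x, v) = ½|v|² + 1/|x|`.) -/
theorem kepler_lrl_noether_identity
    (x x' x'' : ℝ → EuclideanSpace ℝ (Fin 2))
    (hx : ∀ t, HasDerivAt x (x' t) t)
    (hx' : ∀ t, HasDerivAt x' (x'' t) t)
    (hne : ∀ t, x t ≠ 0)
    (hkepler : ∀ t, x'' t = -((‖x t‖ ^ 3)⁻¹ • x t))
    (ξ : ℝ → EuclideanSpace ℝ (Fin 2))
    (hξ0 : ∀ t, ξ t 0 = -(1 / 2) * x t 1 * x' t 1)
    (hξ1 : ∀ t, ξ t 1 = x t 0 * x' t 1 - (1 / 2) * x' t 0 * x t 1) :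
    ∀ t : ℝ,
      ⟪-((‖x t‖ ^ 3)⁻¹ • x t), ξ t⟫ + ⟪x' t, deriv ξ t⟫
          = x' t 0 / ‖x t‖ - ⟪x t, x' t⟫ * x t 0 / ‖x t‖ ^ 3
        ∧ HasDerivAt (fun s => x s 0 / ‖x s‖)
            (x' t 0 / ‖x t‖ - ⟪x t, x' t⟫ * x t 0 / ‖x t‖ ^ 3) t := by
  intro t
  have hξ : ξ = fun s => lrlNoetherField (x s) (x' s) := by
    funext s
    ext i
    fin_cases i
    · exact hξ0 s
    · exact hξ1 s
  have hdξ : deriv ξ t = lrlNoetherField (x' t) (x' t) + lrlNoetherField (x t) (x'' t) := by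
    rw [hξ]
    exact ((hx t).lrlNoetherField (hx' t)).deriv
  refine ⟨?_, (hx t).apply_div_norm (hne t) 0⟩
  rw [hdξ, hkepler t, hξ]
  exact inner_kepler_lrlNoetherField (hne t) (x' t)
end

section
/- Let x : ℝ → ℝ² be a twice differentiable solution of the planar Kepler problem (so x(t) ≠ 0 and ẍ(t) = −x(t)/|x(t)|³ for all t), with (constant) angular momentum 𝕃 = x₁ẋ₂ − ẋ₁x₂ and energy 𝔼 = ½|ẋ|² − 1/|x|. Define ξ : ℝ → ℝ² by ξ₁ = −½x₂ẋ₂, ξ₂ = x₁ẋ₂ − ½ẋ₁x₂, and let W(t) = 4x/|x|⁶ − 6|ẋ|²x/|x|⁵ + 30⟨x, ẋ⟩²x/|x|⁷ − 12⟨x, ẋ⟩ẋ/|x|⁵ (the Euler–Lagrange expression of the Störmer–Verlet perturbation along the solution). Then for all t: ⟨W(t), ξ(t)⟩ = 𝕃 · ( 30·x₂/|x|⁶ + 24·𝔼·x₂/|x|⁵ − 15·𝕃²·x₂/|x|⁷ + 4·d/dt(ẋ₂/|x|³) ). -/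
/-!
Both `⟪x, ξ⟫ = ½ x₂ 𝕃` and `⟪ẋ, ξ⟫ = ẋ₂ 𝕃`, so the left side is `𝕃` times a scalar. The Kepler
equation gives `d/dt (ẋ₂/|x|³) = −x₂/|x|⁶ − 3⟪x, ẋ⟫ẋ₂/|x|⁵`, and after substituting it the two
scalar factors differ by a multiple of `⟪x, ẋ⟫² + 𝕃² − |x|²|ẋ|²`, which vanishes by Lagrange's
identity in the plane.
-/

open scoped RealInnerProductSpace

theorem HasDerivAt.div_norm_pow_three {F : Type*} [NormedAddCommGroup F] [InnerProductSpace ℝ F]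
    {g : ℝ → ℝ} {g' : ℝ} {f : ℝ → F} {f' : F} {t : ℝ}
    (hg : HasDerivAt g g' t) (hf : HasDerivAt f f' t) (h0 : f t ≠ 0) :
    HasDerivAt (fun s => g s / ‖f s‖ ^ 3)
      (g' / ‖f t‖ ^ 3 - 3 * ⟪f t, f'⟫ * g t / ‖f t‖ ^ 5) t := by
  have hr : ‖f t‖ ≠ 0 := norm_ne_zero_iff.mpr h0
  refine (hg.fun_div ((hf.norm h0).fun_pow 3) (pow_ne_zero 3 hr)).congr_deriv ?_
  field_simp
  ring

theorem EuclideanSpace.hasDerivAt_apply {ι : Type*} [Fintype ι] {f : ℝ → EuclideanSpace ℝ ι}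
    {f' : EuclideanSpace ℝ ι} {t : ℝ} (hf : HasDerivAt f f' t) (i : ι) :
    HasDerivAt (fun s => f s i) (f' i) t :=
  (EuclideanSpace.proj i : EuclideanSpace ℝ ι →L[ℝ] ℝ).hasFDerivAt.comp_hasDerivAt t hf

theorem kepler_deriv_velocity_apply_div_norm_pow_three {ι : Type*} [Fintype ι]
    {x x' : ℝ → EuclideanSpace ℝ ι} {t : ℝ} (hx : HasDerivAt x (x' t) t)
    (hx' : HasDerivAt x' (-((‖x t‖ ^ 3)⁻¹ • x t)) t) (hne : x t ≠ 0) (i : ι) :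
    deriv (fun s => x' s i / ‖x s‖ ^ 3) t
      = -x t i / ‖x t‖ ^ 6 - 3 * ⟪x t, x' t⟫ * x' t i / ‖x t‖ ^ 5 := by
  have hr : ‖x t‖ ≠ 0 := norm_ne_zero_iff.mpr hne
  rw [((EuclideanSpace.hasDerivAt_apply hx' i).div_norm_pow_three hx hne).deriv]
  simp only [PiLp.neg_apply, PiLp.smul_apply, smul_eq_mul]
  field_simp

theorem EuclideanSpace.inner_sq_add_wedge_sq_fin_two (u v : EuclideanSpace ℝ (Fin 2)) :
    ⟪u, v⟫ ^ 2 + (u 0 * v 1 - v 0 * u 1) ^ 2 = ‖u‖ ^ 2 * ‖v‖ ^ 2 := by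
  simp only [EuclideanSpace.real_norm_sq_eq, PiLp.inner_apply, Fin.sum_univ_two,
    RCLike.inner_apply, conj_trivial]
  ring

noncomputable def noetherField (x v : EuclideanSpace ℝ (Fin 2)) : EuclideanSpace ℝ (Fin 2) :=
  !₂[-(1 / 2) * x 1 * v 1, x 0 * v 1 - (1 / 2) * v 0 * x 1]

theorem inner_noetherField_position (x v : EuclideanSpace ℝ (Fin 2)) :
    ⟪x, noetherField x v⟫ = (1 / 2) * x 1 * (x 0 * v 1 - v 0 * x 1) := by
  simp only [noetherField, PiLp.inner_apply, Fin.sum_univ_two, RCLike.inner_apply, conj_trivial,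
    Matrix.cons_val_zero, Matrix.cons_val_one, Matrix.cons_val_fin_one]
  ring

theorem inner_noetherField_velocity (x v : EuclideanSpace ℝ (Fin 2)) :
    ⟪v, noetherField x v⟫ = v 1 * (x 0 * v 1 - v 0 * x 1) := by
  simp only [noetherField, PiLp.inner_apply, Fin.sum_univ_two, RCLike.inner_apply, conj_trivial,
    Matrix.cons_val_zero, Matrix.cons_val_one, Matrix.cons_val_fin_one]
  ring

/-- Along a twice differentiable solution of the planar Kepler problem, with
angular momentum `𝕃 = x₁ẋ₂ − ẋ₁x₂`, energy `𝔼 = ½|ẋ|² − 1/|x|`, Noether vector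
field `ξ₁ = −½x₂ẋ₂`, `ξ₂ = x₁ẋ₂ − ½ẋ₁x₂`, and
`W = 4x/|x|⁶ − 6|ẋ|²x/|x|⁵ + 30⟨x, ẋ⟩²x/|x|⁷ − 12⟨x, ẋ⟩ẋ/|x|⁵` (the
Euler–Lagrange expression of the Störmer–Verlet perturbation), one has
`⟨W, ξ⟩ = 𝕃(30x₂/|x|⁶ + 24𝔼x₂/|x|⁵ − 15𝕃²x₂/|x|⁷ + 4 d/dt(ẋ₂/|x|³))`. -/
theorem sv_precession_inner_identity
    (x x' x'' : ℝ → EuclideanSpace ℝ (Fin 2))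
    (hx : ∀ t, HasDerivAt x (x' t) t)
    (hx' : ∀ t, HasDerivAt x' (x'' t) t)
    (hne : ∀ t, x t ≠ 0)
    (hkepler : ∀ t, x'' t = -((‖x t‖ ^ 3)⁻¹ • x t))
    (ξ : ℝ → EuclideanSpace ℝ (Fin 2))
    (hξ0 : ∀ t, ξ t 0 = -(1 / 2) * x t 1 * x' t 1)
    (hξ1 : ∀ t, ξ t 1 = x t 0 * x' t 1 - (1 / 2) * x' t 0 * x t 1) :
    ∀ t : ℝ,
      ⟪(4 / ‖x t‖ ^ 6) • x t - (6 * ‖x' t‖ ^ 2 / ‖x t‖ ^ 5) • x t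
          + (30 * ⟪x t, x' t⟫ ^ 2 / ‖x t‖ ^ 7) • x t
          - (12 * ⟪x t, x' t⟫ / ‖x t‖ ^ 5) • x' t, ξ t⟫
        = (x t 0 * x' t 1 - x' t 0 * x t 1) *
            (30 * x t 1 / ‖x t‖ ^ 6
              + 24 * ((1 / 2) * ‖x' t‖ ^ 2 - ‖x t‖⁻¹) * x t 1 / ‖x t‖ ^ 5
              - 15 * (x t 0 * x' t 1 - x' t 0 * x t 1) ^ 2 * x t 1 / ‖x t‖ ^ 7
              + 4 * deriv (fun s => x' s 1 / ‖x s‖ ^ 3) t) := by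
  intro t
  have hξ : ξ t = noetherField (x t) (x' t) := by
    ext i; fin_cases i
    · exact hξ0 t
    · exact hξ1 t
  have hr : ‖x t‖ ≠ 0 := norm_ne_zero_iff.mpr (hne t)
  have hlagrange := EuclideanSpace.inner_sq_add_wedge_sq_fin_two (x t) (x' t)
  rw [kepler_deriv_velocity_apply_div_norm_pow_three (hx t) (hkepler t ▸ hx' t) (hne t), hξ]
  simp only [inner_sub_left, inner_add_left, inner_smul_left, inner_noetherField_position,
    inner_noetherField_velocity, conj_trivial]
  field_simp
  linear_combination 30 * (x t 0 * x' t 1 - x' t 0 * x t 1) * x t 1 * hlagrange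
end
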